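/- Let p > 1, let (X,d,m) be a metric measure space, let (E,F) be a p-energy on (X,d,m) with p-energy measure Γ, and let Ψ be a doubling function. Assume the volume doubling condition (VD) and the capacity upper bound cap(Ψ)_≤. Then there exists C_cut > 0, depending only on p, C_Ψ, C_VD, C_cap and A_cap, such that for any ε ∈ (0, diam X) and any ε-net V ⊆ X, there exists a family {ψ_z ∈ F : z ∈ V} satisfying: (CO1) for each z ∈ V, 0 ≤ ψ_z ≤ 1 on X, ψ_z = 1 on B(z, ε/4), and ψ_z = 0 on X∖B(z, 5ε/4); (CO2) Σ_{z∈V} ψ_z = 1 on X; (CO3) for each z ∈ V, E(ψ_z) ≤ C_cut·V(z,ε)/Ψ(ε). -/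

import Mathlib

/-- A metric measure space: a locally compact separable metric space equipped with a
positive Radon measure with full support. -/
structure MetricMeasureSpace : Type 1 where
  X : Type
  [ms : MetricSpace X]
  [lc : LocallyCompactSpace X]
  [sep : TopologicalSpace.SeparableSpace X]
  [mb : MeasurableSpace X]
  [bs : BorelSpace X]
  m : MeasureTheory.Measure X
  [radon : m.Regular]
  [fullSupport : m.IsOpenPosMeasure]

attribute [instance] MetricMeasureSpace.ms MetricMeasureSpace.lc MetricMeasureSpace.sep
  MetricMeasureSpace.mb MetricMeasureSpace.bs MetricMeasureSpace.radon
  MetricMeasureSpace.fullSupport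


open MeasureTheory Metric Set Filter Topology ENNReal

noncomputable section

/-- A doubling function (a homeomorphism of `[0,∞)`, hence strictly increasing with `Φ 0 = 0`)
with doubling constant `C`. -/
structure DoublingFn (Φ : ℝ → ℝ) (C : ℝ) : Prop where
  map_zero : Φ 0 = 0
  pos : ∀ r : ℝ, 0 < r → 0 < Φ r
  strictMonoOn : StrictMonoOn Φ (Set.Ici 0)
  continuousOn : ContinuousOn Φ (Set.Ici 0)
  surjOn : Set.SurjOn Φ (Set.Ici 0) (Set.Ici 0)
  one_lt : 1 < C
  doubling : ∀ r : ℝ, 0 < r → Φ (2 * r) ≤ C * Φ r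

/-- Two-sided power scaling assumption on a scaling function `Ψ`. -/
def PowerScaling (Ψ : ℝ → ℝ) : Prop :=
  ∃ β₁ β₂ C : ℝ, 0 < β₁ ∧ β₁ ≤ β₂ ∧ 1 < C ∧
    ∀ r R : ℝ, 0 < r → r ≤ R →
      (1 / C) * (R / r) ^ β₁ ≤ Ψ R / Ψ r ∧ Ψ R / Ψ r ≤ C * (R / r) ^ β₂

/-- The two-sided `p`-Clarkson inequality for the quadruple
`a = E(f+g)`, `b = E(f−g)`, `c = E(f)`, `d = E(g)`. -/
def ClarksonPair (p a b c d : ℝ) : Prop :=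
  (p ≤ 2 → 2 * (c ^ (1 / (p - 1)) + d ^ (1 / (p - 1))) ^ (p - 1) ≤ a + b) ∧
  (2 ≤ p → a + b ≤ 2 * (c ^ (1 / (p - 1)) + d ^ (1 / (p - 1))) ^ (p - 1))

/-- The chain condition (CC). -/
def ChainCond (X : Type*) [MetricSpace X] : Prop :=
  ∃ C : ℝ, 0 < C ∧ ∀ x y : X, ∀ n : ℕ, 0 < n →
    ∃ c : ℕ → X, c 0 = x ∧ c n = y ∧
      ∀ k : ℕ, 1 ≤ k → k ≤ n → dist (c k) (c (k - 1)) ≤ C * dist x y / n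

variable {X : Type*}

/-- A `p`-energy on a metric measure space `(X, d, m)`. The domain `F` is a dense
subspace of `L^p(X; m)` and `E` satisfies the semi-norm, closedness (Banach),
Markovian, regularity, strong locality and `p`-Clarkson axioms. -/
structure PEnergy (p : ℝ) [MetricSpace X] [MeasurableSpace X] (m : Measure X) where
  F : Set (X → ℝ)
  E : (X → ℝ) → ℝ
  memLp : ∀ f ∈ F, MemLp f (ENNReal.ofReal p) m
  add_mem : ∀ f ∈ F, ∀ g ∈ F, f + g ∈ F
  smul_mem : ∀ (c : ℝ), ∀ f ∈ F, c • f ∈ F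
  nonneg : ∀ f ∈ F, 0 ≤ E f
  norm_smul : ∀ (c : ℝ), ∀ f ∈ F, E (c • f) ^ (1 / p) = |c| * E f ^ (1 / p)
  norm_triangle : ∀ f ∈ F, ∀ g ∈ F, E (f + g) ^ (1 / p) ≤ E f ^ (1 / p) + E g ^ (1 / p)
  denseLp : ∀ f : X → ℝ, MemLp f (ENNReal.ofReal p) m → ∀ ε : ℝ, 0 < ε →
    ∃ g ∈ F, eLpNorm (f - g) (ENNReal.ofReal p) m < ENNReal.ofReal ε
  complete : ∀ u : ℕ → X → ℝ, (∀ n, u n ∈ F) →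
    (∀ ε : ℝ, 0 < ε → ∃ N : ℕ, ∀ i ≥ N, ∀ j ≥ N,
      E (u i - u j) ^ (1 / p) + (eLpNorm (u i - u j) (ENNReal.ofReal p) m).toReal < ε) →
    ∃ f ∈ F, Tendsto
      (fun n => E (u n - f) ^ (1 / p) + (eLpNorm (u n - f) (ENNReal.ofReal p) m).toReal)
      atTop (𝓝 0)
  markovian : ∀ φ : ℝ → ℝ, Continuous φ → φ 0 = 0 → (∀ s t : ℝ, |φ t - φ s| ≤ |t - s|) →
    ∀ f ∈ F, φ ∘ f ∈ F ∧ E (φ ∘ f) ≤ E f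
  regular_unifDense : ∀ g : X → ℝ, Continuous g → HasCompactSupport g → ∀ ε : ℝ, 0 < ε →
    ∃ f ∈ F, Continuous f ∧ HasCompactSupport f ∧ ∀ x, |f x - g x| ≤ ε
  regular_energyDense : ∀ f ∈ F, ∀ ε : ℝ, 0 < ε → ∃ g ∈ F, Continuous g ∧ HasCompactSupport g ∧
    E (f - g) ^ (1 / p) + (eLpNorm (f - g) (ENNReal.ofReal p) m).toReal < ε
  stronglyLocal : ∀ f ∈ F, ∀ g ∈ F, HasCompactSupport f → HasCompactSupport g →
    (∃ U : Set X, IsOpen U ∧ tsupport f ⊆ U ∧ ∃ c : ℝ, ∀ x ∈ U, g x = c) →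
    E (f + g) = E f + E g
  clarkson : ∀ f ∈ F, ∀ g ∈ F, ClarksonPair p (E (f + g)) (E (f - g)) (E f) (E g)

/-- A `p`-energy measure associated with a `p`-energy `(E, F)`. -/
structure PEnergyMeasure (p : ℝ) [MetricSpace X] [MeasurableSpace X] (m : Measure X)
    (PE : PEnergy p m) where
  Γ : (X → ℝ) → Measure X
  radon : ∀ f ∈ PE.F, (Γ f).Regular
  total : ∀ f ∈ PE.F, Γ f Set.univ = ENNReal.ofReal (PE.E f)
  norm_smul : ∀ A : Set X, MeasurableSet A → ∀ (c : ℝ), ∀ f ∈ PE.F,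
    (Γ (c • f) A).toReal ^ (1 / p) = |c| * (Γ f A).toReal ^ (1 / p)
  norm_triangle : ∀ A : Set X, MeasurableSet A → ∀ f ∈ PE.F, ∀ g ∈ PE.F,
    (Γ (f + g) A).toReal ^ (1 / p) ≤ (Γ f A).toReal ^ (1 / p) + (Γ g A).toReal ^ (1 / p)
  locality : ∀ A : Set X, MeasurableSet A →
    ∀ f ∈ PE.F, ∀ g ∈ PE.F, Continuous f → HasCompactSupport f →
      Continuous g → HasCompactSupport g →
      (∃ c : ℝ, ∀ x ∈ A, f x - g x = c) → Γ f A = Γ g A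
  clarkson : ∀ A : Set X, MeasurableSet A → ∀ f ∈ PE.F, ∀ g ∈ PE.F,
    ClarksonPair p (Γ (f + g) A).toReal (Γ (f - g) A).toReal (Γ f A).toReal (Γ g A).toReal
  chainRule : ∀ f ∈ PE.F, Continuous f → HasCompactSupport f →
    ∀ φ : ℝ → ℝ, ContDiff ℝ 1 φ → φ ∘ f ∈ PE.F →
      Γ (φ ∘ f) = (Γ f).withDensity fun x => ENNReal.ofReal (|deriv φ (f x)| ^ p)

/-- Volume doubling condition (VD). -/
def VolDoubling [MetricSpace X] [MeasurableSpace X] (m : Measure X) : Prop :=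
  ∃ C : ℝ, 0 < C ∧ ∀ (x : X) (r : ℝ), 0 < r →
    m (ball x (2 * r)) ≤ ENNReal.ofReal C * m (ball x r)

/-- Volume regularity condition V(Φ). -/
def VolRegular [MetricSpace X] [MeasurableSpace X] (m : Measure X) (Φ : ℝ → ℝ) : Prop :=
  ∃ C : ℝ, 0 < C ∧ ∀ (x : X) (r : ℝ), 0 < r →
    ENNReal.ofReal r < EMetric.diam (Set.univ : Set X) →
      ENNReal.ofReal (Φ r / C) ≤ m (ball x r) ∧ m (ball x r) ≤ ENNReal.ofReal (C * Φ r)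

/-- The Poincaré inequality PI(Ψ). -/
def PoincareIneq (p : ℝ) [MetricSpace X] [MeasurableSpace X] (m : Measure X)
    (PE : PEnergy p m) (GM : PEnergyMeasure p m PE) (Ψ : ℝ → ℝ) : Prop :=
  ∃ C : ℝ, 0 < C ∧ ∃ A : ℝ, 1 ≤ A ∧ ∀ (x : X) (r : ℝ), 0 < r →
    ENNReal.ofReal (A * r) < EMetric.diam (Set.univ : Set X) →
    ∀ f ∈ PE.F,
      ∫⁻ y in ball x r, ENNReal.ofReal (|f y - ⨍ z in ball x r, f z ∂m| ^ p) ∂m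
        ≤ ENNReal.ofReal (C * Ψ r) * GM.Γ f (ball x (A * r))

/-- The capacity between two sets `A₁` and `A₂` associated with a `p`-energy,
with the convention `sInf ∅ = ∞`. -/
def capBetween (p : ℝ) [MetricSpace X] [MeasurableSpace X] (m : Measure X)
    (PE : PEnergy p m) (A₁ A₂ : Set X) : ℝ≥0∞ :=
  sInf ((fun φ => ENNReal.ofReal (PE.E φ)) ''
    {φ : X → ℝ | φ ∈ PE.F ∧ (∃ U : Set X, IsOpen U ∧ A₁ ⊆ U ∧ ∀ x ∈ U, φ x = 1) ∧
      (∃ V : Set X, IsOpen V ∧ A₂ ⊆ V ∧ ∀ x ∈ V, φ x = 0)})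

/-- Capacity upper bound cap(Ψ)_≤. -/
def CapUpper (p : ℝ) [MetricSpace X] [MeasurableSpace X] (m : Measure X)
    (PE : PEnergy p m) (Ψ : ℝ → ℝ) : Prop :=
  ∃ C : ℝ, 0 < C ∧ ∃ A : ℝ, 1 < A ∧ ∀ (x : X) (r : ℝ), 0 < r →
    capBetween p m PE (ball x r) (ball x (A * r))ᶜ
      ≤ ENNReal.ofReal C * m (ball x r) / ENNReal.ofReal (Ψ r)

/-- Two-sided capacity bounds cap(Ψ): upper and lower bound with common constants. -/
def CapBounds (p : ℝ) [MetricSpace X] [MeasurableSpace X] (m : Measure X)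
    (PE : PEnergy p m) (Ψ : ℝ → ℝ) : Prop :=
  ∃ C : ℝ, 0 < C ∧ ∃ A : ℝ, 1 < A ∧ ∀ (x : X) (r : ℝ), 0 < r →
    capBetween p m PE (ball x r) (ball x (A * r))ᶜ
      ≤ ENNReal.ofReal C * m (ball x r) / ENNReal.ofReal (Ψ r) ∧
    m (ball x r) / ENNReal.ofReal (C * Ψ r)
      ≤ capBetween p m PE (ball x r) (ball x (A * r))ᶜ

/-- `E₁(u) = E(u) + ‖u‖_{L^p}^p`. -/
def E1 (p : ℝ) [MetricSpace X] [MeasurableSpace X] (m : Measure X) (PE : PEnergy p m)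
    (u : X → ℝ) : ℝ :=
  PE.E u + (eLpNorm u (ENNReal.ofReal p) m).toReal ^ p

/-- The directional derivative `E₁(u; v) = (1/p) d/dt E₁(u + t v)|_{t=0}`. -/
def E1dir (p : ℝ) [MetricSpace X] [MeasurableSpace X] (m : Measure X) (PE : PEnergy p m)
    (u v : X → ℝ) : ℝ :=
  (1 / p) * deriv (fun t : ℝ => E1 p m PE (u + t • v)) 0

/-- The capacity `cap₁` of an open set, with the convention `sInf ∅ = ∞`. -/
def cap1Open (p : ℝ) [MetricSpace X] [MeasurableSpace X] (m : Measure X) (PE : PEnergy p m)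
    (A : Set X) : ℝ≥0∞ :=
  sInf ((fun u => ENNReal.ofReal (E1 p m PE u)) ''
    {u : X → ℝ | u ∈ PE.F ∧ ∀ᵐ x ∂(m.restrict A), 1 ≤ u x})

/-- The capacity `cap₁` of an arbitrary set. -/
def cap1 (p : ℝ) [MetricSpace X] [MeasurableSpace X] (m : Measure X) (PE : PEnergy p m)
    (A : Set X) : ℝ≥0∞ :=
  ⨅ (B : Set X) (_ : IsOpen B) (_ : A ⊆ B), cap1Open p m PE B

/-- `u` is quasi-continuous on `G`. -/
def QuasiContinuousOn (p : ℝ) [MetricSpace X] [MeasurableSpace X] (m : Measure X)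
    (PE : PEnergy p m) (u : X → ℝ) (G : Set X) : Prop :=
  ∀ ε : ℝ, 0 < ε → ∃ G' : Set X, IsOpen G' ∧ cap1 p m PE G' < ENNReal.ofReal ε ∧
    ContinuousOn u (G \ G')

/-- `u` is quasi-continuous (on all of `X`). -/
def QuasiContinuous (p : ℝ) [MetricSpace X] [MeasurableSpace X] (m : Measure X)
    (PE : PEnergy p m) (u : X → ℝ) : Prop :=
  QuasiContinuousOn p m PE u Set.univ

/-- `φ` is a cutoff function for `B(x,r) ⊆ B(x, A·r)`. -/
def IsCutoff (p : ℝ) [MetricSpace X] [MeasurableSpace X] (m : Measure X) (PE : PEnergy p m)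
    (x : X) (r A : ℝ) (φ : X → ℝ) : Prop :=
  φ ∈ PE.F ∧ (∀ y, 0 ≤ φ y ∧ φ y ≤ 1) ∧
    (∃ U : Set X, IsOpen U ∧ closure (ball x r) ⊆ U ∧ ∀ y ∈ U, φ y = 1) ∧
    tsupport φ ⊆ ball x (A * r)

/-- The cutoff Sobolev inequality CS(Ψ). -/
def CutoffSobolev (p : ℝ) [MetricSpace X] [MeasurableSpace X] (m : Measure X)
    (PE : PEnergy p m) (GM : PEnergyMeasure p m PE) (Ψ : ℝ → ℝ) : Prop :=
  ∃ C₁ C₂ A : ℝ, 0 < C₁ ∧ 0 < C₂ ∧ 1 < A ∧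
    ∀ (x : X) (r : ℝ), 0 < r → ∃ φ : X → ℝ, IsCutoff p m PE x r A φ ∧
      ∀ f ∈ PE.F, ∀ ft : X → ℝ, QuasiContinuous p m PE ft → ft =ᵐ[m] f →
        ∫⁻ y in ball x (A * r), ENNReal.ofReal (|ft y| ^ p) ∂(GM.Γ φ)
          ≤ ENNReal.ofReal C₁ * GM.Γ f (ball x (A * r)) +
            ENNReal.ofReal C₂ / ENNReal.ofReal (Ψ r) *
              ∫⁻ y in ball x (A * r), ENNReal.ofReal (|f y| ^ p) ∂m

/-- An `ε`-net. -/
def IsNet [MetricSpace X] (ε : ℝ) (V : Set X) : Prop :=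
  (∀ x ∈ V, ∀ y ∈ V, x ≠ y → ε ≤ dist x y) ∧ ∀ z : X, ∃ x ∈ V, dist x z < ε

/-- The local domain `F_loc`. -/
def FLoc (p : ℝ) [MetricSpace X] [MeasurableSpace X] (m : Measure X) (PE : PEnergy p m) :
    Set (X → ℝ) :=
  {u : X → ℝ | ∀ U : Set X, IsOpen U → IsCompact (closure U) →
    ∃ f ∈ PE.F, ∀ᵐ x ∂(m.restrict U), u x = f x}

/-- `ν` is the energy measure of `u ∈ F_loc`, i.e. `ν` agrees with `Γ(u^#)` on every
relatively compact open set `U` on which `u` has a representative `u^# ∈ F`. -/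
def LocalEnergyMeasure (p : ℝ) [MetricSpace X] [MeasurableSpace X] (m : Measure X)
    (PE : PEnergy p m) (GM : PEnergyMeasure p m PE) (u : X → ℝ) (ν : Measure X) : Prop :=
  ∀ U : Set X, IsOpen U → IsCompact (closure U) → ∀ f ∈ PE.F,
    (∀ᵐ x ∂(m.restrict U), u x = f x) → ν.restrict U = (GM.Γ f).restrict U

/-- The restricted maximal function `M_R ν(x) = sup_{0<r<R} ν(B(x,r))/m(B(x,r))`. -/
def maxFn [MetricSpace X] [MeasurableSpace X] (m ν : Measure X) (R : ℝ) (x : X) : ℝ≥0∞ :=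
  ⨆ (r : ℝ) (_ : 0 < r) (_ : r < R), ν (ball x r) / m (ball x r)

/-- A geodesic metric space: any two points are joined by an isometric embedding of
`[0, dist x y]`. -/
def IsGeodesicSpace (X : Type*) [MetricSpace X] : Prop :=
  ∀ x y : X, ∃ γ : ℝ → X, γ 0 = x ∧ γ (dist x y) = y ∧
    ∀ s ∈ Set.Icc 0 (dist x y), ∀ t ∈ Set.Icc 0 (dist x y), dist (γ s) (γ t) = |s - t|

/-- Membership in the Besov space `B^{p,α}(X,d,m)`. -/
def MemBesov (p α : ℝ) [MetricSpace X] [MeasurableSpace X] (m : Measure X) (f : X → ℝ) :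
    Prop :=
  MemLp f (ENNReal.ofReal p) m ∧
  ∃ M : ℝ≥0∞, M ≠ ⊤ ∧ ∀ r : ℝ, 0 < r → ENNReal.ofReal r < EMetric.diam (Set.univ : Set X) →
    ENNReal.ofReal (1 / r ^ (p * α)) *
      ∫⁻ x, (m (ball x r))⁻¹ * ∫⁻ y in ball x r, ENNReal.ofReal (|f x - f y| ^ p) ∂m ∂m ≤ M

/-- The critical Besov exponent `β_p(X,d,m) = p · α_p(X,d,m)`. -/
def besovCriticalBeta (p : ℝ) (X : Type*) [MetricSpace X] [MeasurableSpace X]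
    (m : Measure X) : ℝ :=
  p * sSup {α : ℝ | 0 < α ∧ ∃ f : X → ℝ, MemBesov p α m f ∧ ¬ ∃ c : ℝ, f =ᵐ[m] fun _ => c}

/-- `ut` is a quasi-continuous modification of `u`. -/
def QCModification (p : ℝ) {X : Type*} [MetricSpace X] [MeasurableSpace X] (m : Measure X)
    (PE : PEnergy p m) (u ut : X → ℝ) : Prop :=
  QuasiContinuous p m PE ut ∧ ut =ᵐ[m] u

/-- A pointwise property holds quasi-everywhere on `A`. -/
def QEOn (p : ℝ) {X : Type*} [MetricSpace X] [MeasurableSpace X] (m : Measure X)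
    (PE : PEnergy p m) (A : Set X) (P : X → Prop) : Prop :=
  ∃ N : Set X, cap1 p m PE N = 0 ∧ ∀ x ∈ A \ N, P x

/-- `L_A = {u ∈ F : ũ ≥ 1 q.e. on A}` for an arbitrary set `A`. -/
def LSet (p : ℝ) {X : Type*} [MetricSpace X] [MeasurableSpace X] (m : Measure X)
    (PE : PEnergy p m) (A : Set X) : Set (X → ℝ) :=
  {u : X → ℝ | u ∈ PE.F ∧ ∃ ut : X → ℝ, QCModification p m PE u ut ∧
    QEOn p m PE A fun x => 1 ≤ ut x}

end

/-!
Near-optimal functions for the capacity of `B(t, s) ⊆ B(t, A_cap s)` at a scale `s ≍ η r`, summed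
over a maximal `s`-separated subset of `B(x, r)` and truncated, are cutoff functions for
`B(x, r) ⊆ B(x, (1 + η) r)` whose energy is `≲ V(x, r) / Ψ(r)` by (VD) and the doubling of `Ψ`.
Take such cutoffs `θ_z` for `B(z, ε/4) ⊆ B(z, ε/2)`, which have disjoint supports along the net,
and `φ_z` for `B(z, ε) ⊆ B(z, 5ε/4)`, which cover `X`, and put
`ψ_z = θ_z + φ_z (1 - ∑ θ_w) / ∑ φ_w`. Near `z` this is built from boundedly many (by (VD))
nearby cutoffs through sums, products of bounded functions and normal contractions, all of which
are controlled by the seminorm `E^{1/p}` (products via polarisation with truncated squares).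
-/

noncomputable def unitClamp (t : ℝ) : ℝ := min (max t 0) 1

lemma lipschitzWith_unitClamp : LipschitzWith 1 unitClamp :=
  (LipschitzWith.id.max_const 0).min_const 1

lemma unitClamp_mem_Icc (t : ℝ) : unitClamp t ∈ Icc 0 1 :=
  ⟨le_min (le_max_right _ _) zero_le_one, min_le_right _ _⟩

lemma unitClamp_of_nonpos {t : ℝ} (h : t ≤ 0) : unitClamp t = 0 := by
  simp [unitClamp, max_eq_right h]

lemma unitClamp_of_one_le {t : ℝ} (h : 1 ≤ t) : unitClamp t = 1 := by
  simp [unitClamp, max_eq_left (zero_le_one.trans h), h]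

noncomputable def invMaxOneSubOne (t : ℝ) : ℝ := (max t 1)⁻¹ - 1

lemma lipschitzWith_invMaxOneSubOne : LipschitzWith 1 invMaxOneSubOne := by
  refine LipschitzWith.of_dist_le_mul fun t s => ?_
  have ht : 1 ≤ max t 1 := le_max_right _ _
  have hs : 1 ≤ max s 1 := le_max_right _ _
  have hdiff : invMaxOneSubOne t - invMaxOneSubOne s =
      (max s 1 - max t 1) / (max t 1 * max s 1) := by
    unfold invMaxOneSubOne; field_simp; ring
  rw [NNReal.coe_one, one_mul, Real.dist_eq, Real.dist_eq, hdiff, abs_div,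
    abs_of_pos (by positivity : 0 < max t 1 * max s 1), abs_sub_comm]
  calc |max t 1 - max s 1| / (max t 1 * max s 1) ≤ |max t 1 - max s 1| :=
        div_le_self (abs_nonneg _) (one_le_mul_of_one_le_of_one_le ht hs)
    _ ≤ |t - s| := abs_max_sub_max_le_abs _ _ _

lemma invMaxOneSubOne_zero : invMaxOneSubOne 0 = 0 := by simp [invMaxOneSubOne]

lemma abs_invMaxOneSubOne_le_one (t : ℝ) : |invMaxOneSubOne t| ≤ 1 := by
  have h₀ : 0 < (max t 1)⁻¹ := inv_pos.mpr (zero_lt_one.trans_le (le_max_right _ _))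
  have h₁ : (max t 1)⁻¹ ≤ 1 := inv_le_one_of_one_le₀ (le_max_right _ _)
  rw [invMaxOneSubOne, abs_le]
  constructor <;> linarith

lemma invMaxOneSubOne_of_one_le {t : ℝ} (h : 1 ≤ t) : invMaxOneSubOne t = t⁻¹ - 1 := by
  rw [invMaxOneSubOne, max_eq_left h]

noncomputable def clampSqHalf (M t : ℝ) : ℝ := min (max t (-M)) M ^ 2 / (2 * M)

lemma lipschitzWith_clampSqHalf {M : ℝ} (hM : 0 < M) : LipschitzWith 1 (clampSqHalf M) := by
  refine LipschitzWith.of_dist_le_mul fun t s => ?_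
  set c := min (max t (-M)) M
  set d := min (max s (-M)) M
  have hc : |c| ≤ M := abs_le.mpr ⟨le_min (le_max_right _ _) (by linarith), min_le_right _ _⟩
  have hd : |d| ≤ M := abs_le.mpr ⟨le_min (le_max_right _ _) (by linarith), min_le_right _ _⟩
  have hcd : |c - d| ≤ |t - s| :=
    (((LipschitzWith.id.max_const (-M)).min_const M).dist_le_mul t s).trans_eq
      (by simp [Real.dist_eq])
  have hdiff : clampSqHalf M t - clampSqHalf M s = (c - d) * (c + d) / (2 * M) := by
    unfold clampSqHalf; ring
  rw [NNReal.coe_one, one_mul, Real.dist_eq, Real.dist_eq, hdiff, abs_div, abs_mul,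
    abs_of_pos (by positivity : 0 < 2 * M), div_le_iff₀ (by positivity)]
  exact mul_le_mul hcd ((abs_add_le c d).trans (by linarith)) (abs_nonneg _) (abs_nonneg _)

lemma clampSqHalf_zero {M : ℝ} (hM : 0 < M) : clampSqHalf M 0 = 0 := by
  simp [clampSqHalf, hM.le]

lemma two_mul_mul_clampSqHalf {M t : ℝ} (hM : 0 < M) (h : |t| ≤ M) :
    2 * M * clampSqHalf M t = t * t := by
  rw [abs_le] at h
  rw [clampSqHalf, max_eq_left h.1, min_eq_left h.2]
  field_simp

section Pointwise

variable {α : Type*}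

lemma mul_self_eq_smul_clampSqHalf {M : ℝ} (hM : 0 < M) {f : α → ℝ} (hbf : ∀ x, |f x| ≤ M) :
    f * f = (2 * M) • (clampSqHalf M ∘ f) := by
  ext x
  exact (two_mul_mul_clampSqHalf hM (hbf x)).symm

lemma mul_eq_polarization (f g : α → ℝ) :
    f * g = (1 / 2 : ℝ) • ((f + g) * (f + g) - f * f - g * g) := by
  ext x
  simp only [Pi.mul_apply, Pi.smul_apply, Pi.sub_apply, Pi.add_apply, smul_eq_mul]
  ring

lemma abs_add_le_two {f g : α → ℝ} (hbf : ∀ x, |f x| ≤ 1) (hbg : ∀ x, |g x| ≤ 1) (x : α) :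
    |(f + g) x| ≤ 2 :=
  (abs_add_le _ _).trans (by linarith [hbf x, hbg x])

end Pointwise

lemma finite_of_forall_finset_card_le {α : Type*} {S : Set α} {c : ℝ}
    (h : ∀ s : Finset α, ↑s ⊆ S → (s.card : ℝ) ≤ c) : S.Finite := by
  by_contra hS
  obtain ⟨s, hsS, hs⟩ := Set.Infinite.exists_subset_card_eq hS (⌊c⌋₊ + 1)
  have hc := h s hsS
  rw [hs, Nat.cast_add, Nat.cast_one] at hc
  linarith [Nat.lt_floor_add_one c]

lemma tsum_subtype_eq_sum {α : Type*} {V : Set α} {f : α → ℝ} {s : Finset α} (hsV : ↑s ⊆ V)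
    (hf : ∀ w ∈ V, w ∉ s → f w = 0) : ∑' w : V, f w = ∑ w ∈ s, f w := by
  rw [tsum_subtype V f, tsum_eq_sum (s := s)]
  · exact Finset.sum_congr rfl fun w hw => Set.indicator_of_mem (hsV hw) f
  · intro w hw
    by_cases hwV : w ∈ V
    · rw [Set.indicator_of_mem hwV]; exact hf w hwV hw
    · exact Set.indicator_of_notMem hwV f

lemma le_rpow_mul_of_rpow_one_div_le {p a K b : ℝ} (hp : 0 < p) (ha : 0 ≤ a) (hK : 0 ≤ K)
    (hb : 0 ≤ b) (h : a ^ (1 / p) ≤ K * b ^ (1 / p)) : a ≤ K ^ p * b := by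
  rw [one_div] at h
  rwa [Real.rpow_inv_le_iff_of_pos ha (by positivity) hp,
    Real.mul_rpow hK (by positivity), Real.rpow_inv_rpow hb hp.ne'] at h

lemma ofReal_mul_div_ofReal {C a : ℝ} {μ : ℝ≥0∞} (hμ : μ ≠ ⊤) (hC : 0 ≤ C) (ha : 0 < a) :
    ENNReal.ofReal C * μ / ENNReal.ofReal a = ENNReal.ofReal (C * μ.toReal / a) := by
  rw [ENNReal.ofReal_div_of_pos ha, ENNReal.ofReal_mul hC, ENNReal.ofReal_toReal hμ]

lemma DoublingFn.le_pow_mul {Ψ : ℝ → ℝ} {C : ℝ} (hΨ : DoublingFn Ψ C) {r s : ℝ} (hr : 0 ≤ r)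
    (hs : 0 < s) {k : ℕ} (h : r ≤ 2 ^ k * s) : Ψ r ≤ C ^ k * Ψ s := by
  refine (hΨ.strictMonoOn.monotoneOn hr (hr.trans h) h).trans ?_
  clear h
  induction k with
  | zero => simp
  | succ k ih =>
    calc Ψ (2 ^ (k + 1) * s) = Ψ (2 * (2 ^ k * s)) := by ring_nf
      _ ≤ C * Ψ (2 ^ k * s) := hΨ.doubling _ (by positivity)
      _ ≤ C * (C ^ k * Ψ s) :=
          mul_le_mul_of_nonneg_left ih (zero_le_one.trans hΨ.one_lt.le)
      _ = C ^ (k + 1) * Ψ s := by ring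

namespace PEnergy

variable {X : Type*} [MetricSpace X] [MeasurableSpace X] {m : Measure X} {p : ℝ}
  (PE : PEnergy p m)

lemma comp_mem {φ : ℝ → ℝ} (hφ : LipschitzWith 1 φ) (h0 : φ 0 = 0) {f : X → ℝ}
    (hf : f ∈ PE.F) : φ ∘ f ∈ PE.F :=
  (PE.markovian φ hφ.continuous h0
    (fun s t => by simpa [Real.dist_eq] using hφ.dist_le_mul t s) f hf).1

lemma E_comp_le {φ : ℝ → ℝ} (hφ : LipschitzWith 1 φ) (h0 : φ 0 = 0) {f : X → ℝ}
    (hf : f ∈ PE.F) : PE.E (φ ∘ f) ≤ PE.E f :=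
  (PE.markovian φ hφ.continuous h0
    (fun s t => by simpa [Real.dist_eq] using hφ.dist_le_mul t s) f hf).2

lemma zero_mem : (0 : X → ℝ) ∈ PE.F := by
  obtain ⟨g, hg, -⟩ := PE.denseLp 0 MemLp.zero 1 one_pos
  simpa using PE.smul_mem 0 g hg

lemma rpow_E_zero : PE.E 0 ^ (1 / p) = 0 := by
  simpa using PE.norm_smul 0 0 PE.zero_mem

lemma sub_mem {f g : X → ℝ} (hf : f ∈ PE.F) (hg : g ∈ PE.F) : f - g ∈ PE.F := by
  simpa [sub_eq_add_neg] using PE.add_mem f hf _ (PE.smul_mem (-1) g hg)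

lemma rpow_E_sub_le {f g : X → ℝ} (hf : f ∈ PE.F) (hg : g ∈ PE.F) :
    PE.E (f - g) ^ (1 / p) ≤ PE.E f ^ (1 / p) + PE.E g ^ (1 / p) := by
  have h := PE.norm_triangle f hf _ (PE.smul_mem (-1) g hg)
  rwa [PE.norm_smul _ _ hg, abs_neg, abs_one, one_mul, neg_one_smul, ← sub_eq_add_neg] at h

lemma sum_mem {ι : Type*} (s : Finset ι) {f : ι → X → ℝ} (hf : ∀ i ∈ s, f i ∈ PE.F) :
    ∑ i ∈ s, f i ∈ PE.F := by
  classical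
  induction s using Finset.induction_on with
  | empty => simpa using PE.zero_mem
  | insert a s ha ih =>
    rw [Finset.sum_insert ha]
    exact PE.add_mem _ (hf a (s.mem_insert_self a)) _
      (ih fun i hi => hf i (Finset.mem_insert_of_mem hi))

lemma rpow_E_sum_le {ι : Type*} (s : Finset ι) {f : ι → X → ℝ} (hf : ∀ i ∈ s, f i ∈ PE.F) :
    PE.E (∑ i ∈ s, f i) ^ (1 / p) ≤ ∑ i ∈ s, PE.E (f i) ^ (1 / p) := by
  classical
  induction s using Finset.induction_on with
  | empty => rw [Finset.sum_empty, Finset.sum_empty, PE.rpow_E_zero]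
  | insert a s ha ih =>
    have hs : ∀ i ∈ s, f i ∈ PE.F := fun i hi => hf i (Finset.mem_insert_of_mem hi)
    rw [Finset.sum_insert ha, Finset.sum_insert ha]
    exact (PE.norm_triangle _ (hf a (s.mem_insert_self a)) _ (PE.sum_mem s hs)).trans
      (by linarith [ih hs])

lemma rpow_E_sum_le_card_mul (hp : 0 < p) {ι : Type*} (s : Finset ι) {f : ι → X → ℝ}
    (hf : ∀ i ∈ s, f i ∈ PE.F) {b : ℝ} (hb : ∀ i ∈ s, PE.E (f i) ≤ b) :
    PE.E (∑ i ∈ s, f i) ^ (1 / p) ≤ s.card * b ^ (1 / p) := by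
  refine (PE.rpow_E_sum_le s hf).trans ?_
  rw [← nsmul_eq_mul]
  exact Finset.sum_le_card_nsmul _ _ _ fun i hi =>
    Real.rpow_le_rpow (PE.nonneg _ (hf i hi)) (hb i hi) (by positivity)

lemma mul_self_mem {M : ℝ} (hM : 0 < M) {f : X → ℝ} (hf : f ∈ PE.F) (hbf : ∀ x, |f x| ≤ M) :
    f * f ∈ PE.F := by
  rw [mul_self_eq_smul_clampSqHalf hM hbf]
  exact PE.smul_mem _ _ (PE.comp_mem (lipschitzWith_clampSqHalf hM) (clampSqHalf_zero hM) hf)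

lemma rpow_E_mul_self_le (hp : 0 < p) {M : ℝ} (hM : 0 < M) {f : X → ℝ} (hf : f ∈ PE.F)
    (hbf : ∀ x, |f x| ≤ M) : PE.E (f * f) ^ (1 / p) ≤ 2 * M * PE.E f ^ (1 / p) := by
  have hmem := PE.comp_mem (lipschitzWith_clampSqHalf hM) (clampSqHalf_zero hM) hf
  rw [mul_self_eq_smul_clampSqHalf hM hbf, PE.norm_smul _ _ hmem, abs_of_pos (by positivity)]
  exact mul_le_mul_of_nonneg_left (Real.rpow_le_rpow (PE.nonneg _ hmem)
    (PE.E_comp_le (lipschitzWith_clampSqHalf hM) (clampSqHalf_zero hM) hf) (by positivity))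
    (by positivity)

lemma mul_mem {f g : X → ℝ} (hf : f ∈ PE.F) (hg : g ∈ PE.F) (hbf : ∀ x, |f x| ≤ 1)
    (hbg : ∀ x, |g x| ≤ 1) : f * g ∈ PE.F := by
  rw [mul_eq_polarization]
  refine PE.smul_mem _ _ (PE.sub_mem (PE.sub_mem ?_ (PE.mul_self_mem one_pos hf hbf))
    (PE.mul_self_mem one_pos hg hbg))
  exact PE.mul_self_mem two_pos (PE.add_mem f hf g hg) (abs_add_le_two hbf hbg)

lemma rpow_E_mul_le (hp : 0 < p) {f g : X → ℝ} (hf : f ∈ PE.F) (hg : g ∈ PE.F)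
    (hbf : ∀ x, |f x| ≤ 1) (hbg : ∀ x, |g x| ≤ 1) :
    PE.E (f * g) ^ (1 / p) ≤ 3 * (PE.E f ^ (1 / p) + PE.E g ^ (1 / p)) := by
  have hfg := PE.add_mem f hf g hg
  have hsq := PE.mul_self_mem two_pos hfg (abs_add_le_two hbf hbg)
  have hsqf := PE.mul_self_mem one_pos hf hbf
  have hsqg := PE.mul_self_mem one_pos hg hbg
  have e₁ := PE.rpow_E_sub_le (PE.sub_mem hsq hsqf) hsqg
  have e₂ := PE.rpow_E_sub_le hsq hsqf
  have e₃ := PE.rpow_E_mul_self_le hp two_pos hfg (abs_add_le_two hbf hbg)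
  have e₄ := PE.rpow_E_mul_self_le hp one_pos hf hbf
  have e₅ := PE.rpow_E_mul_self_le hp one_pos hg hbg
  have e₆ := PE.norm_triangle f hf g hg
  rw [mul_eq_polarization, PE.norm_smul _ _ (PE.sub_mem (PE.sub_mem hsq hsqf) hsqg),
    abs_of_pos (by norm_num)]
  linarith

end PEnergy

section VolumeDoubling

variable {X : Type*} [MetricSpace X] [MeasurableSpace X] {m : Measure X} {CVD : ℝ}

def VolDoublingWith (m : Measure X) (C : ℝ) : Prop :=
  ∀ (x : X) (r : ℝ), 0 < r → m (ball x (2 * r)) ≤ ENNReal.ofReal C * m (ball x r)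

namespace VolDoublingWith

lemma measure_ball_two_pow_mul_le (hVD : VolDoublingWith m CVD) (x : X) {r : ℝ} (hr : 0 < r)
    (n : ℕ) : m (ball x (2 ^ n * r)) ≤ ENNReal.ofReal CVD ^ n * m (ball x r) := by
  induction n with
  | zero => simp
  | succ n ih =>
    calc m (ball x (2 ^ (n + 1) * r)) = m (ball x (2 * (2 ^ n * r))) := by ring_nf
      _ ≤ ENNReal.ofReal CVD * m (ball x (2 ^ n * r)) := hVD x _ (by positivity)
      _ ≤ ENNReal.ofReal CVD * (ENNReal.ofReal CVD ^ n * m (ball x r)) := by gcongr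
      _ = ENNReal.ofReal CVD ^ (n + 1) * m (ball x r) := by ring

variable [LocallyCompactSpace X] [IsFiniteMeasureOnCompacts m]

lemma measure_ball_lt_top (hVD : VolDoublingWith m CVD) (x : X) (r : ℝ) :
    m (ball x r) < ⊤ := by
  obtain ⟨K, hK, hKx⟩ := exists_compact_mem_nhds x
  obtain ⟨r₀, hr₀, hball⟩ := Metric.mem_nhds_iff.mp hKx
  obtain ⟨n, hn⟩ := pow_unbounded_of_one_lt (r / r₀) (one_lt_two (α := ℝ))
  calc m (ball x r) ≤ m (ball x (2 ^ n * r₀)) :=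
        measure_mono (ball_subset_ball ((div_lt_iff₀ hr₀).mp hn).le)
    _ ≤ ENNReal.ofReal CVD ^ n * m K :=
        (hVD.measure_ball_two_pow_mul_le x hr₀ n).trans (by gcongr)
    _ < ⊤ := ENNReal.mul_lt_top (ENNReal.pow_lt_top ENNReal.ofReal_lt_top) hK.measure_lt_top

lemma toReal_measure_ball_le (hCVD : 0 ≤ CVD) (hVD : VolDoublingWith m CVD) {x z : X}
    {r R : ℝ} (hr : 0 < r) {n : ℕ} (h : dist x z + R ≤ 2 ^ n * r) :
    (m (ball x R)).toReal ≤ CVD ^ n * (m (ball z r)).toReal := by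
  have hsub : ball x R ⊆ ball z (2 ^ n * r) := fun y hy => by
    rw [mem_ball] at hy ⊢
    linarith [dist_triangle y x z]
  have hle := (measure_mono hsub).trans (hVD.measure_ball_two_pow_mul_le z hr n)
  have hlt : ENNReal.ofReal CVD ^ n * m (ball z r) < ⊤ :=
    ENNReal.mul_lt_top (ENNReal.pow_lt_top ENNReal.ofReal_lt_top) (hVD.measure_ball_lt_top z r)
  simpa [ENNReal.toReal_mul, ENNReal.toReal_pow, ENNReal.toReal_ofReal hCVD] using
    ENNReal.toReal_mono hlt.ne hle

lemma toReal_measure_ball_div_le {Ψ : ℝ → ℝ} {CΨ : ℝ} (hΨ : DoublingFn Ψ CΨ) (hCVD : 0 ≤ CVD)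
    (hVD : VolDoublingWith m CVD) {w z : X} {ρ r : ℝ} (hρ : 0 < ρ) (hr : 0 < r) {n k : ℕ}
    (hn : dist w z + ρ ≤ 2 ^ n * r) (hk : r ≤ 2 ^ k * ρ) :
    (m (ball w ρ)).toReal / Ψ ρ ≤ CVD ^ n * CΨ ^ k * (m (ball z r)).toReal / Ψ r := by
  have hVw := hVD.toReal_measure_ball_le hCVD hr hn
  have hΨr : Ψ r ≤ CΨ ^ k * Ψ ρ := hΨ.le_pow_mul hr.le hρ hk
  have := hΨ.pos ρ hρ
  have := hΨ.pos r hr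
  rw [div_le_div_iff₀ (by positivity) (by positivity)]
  calc (m (ball w ρ)).toReal * Ψ r ≤ CVD ^ n * (m (ball z r)).toReal * (CΨ ^ k * Ψ ρ) := by
        gcongr
    _ = _ := by ring

variable [OpensMeasurableSpace X] [m.IsOpenPosMeasure]

lemma card_le_of_separated (hCVD : 0 ≤ CVD) (hVD : VolDoublingWith m CVD) {x : X} {R δ : ℝ}
    (hR : 0 < R) (hδ : 0 < δ) {n : ℕ} (hn : 2 * R + δ / 2 ≤ 2 ^ n * (δ / 2)) {T : Finset X}
    (hT : ↑T ⊆ ball x R) (hsep : (T : Set X).Pairwise fun a b => δ ≤ dist a b) :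
    (T.card : ℝ) ≤ CVD ^ n := by
  set A := (m (ball x (R + δ / 2))).toReal
  have hA : 0 < A := ENNReal.toReal_pos (measure_ball_pos m x (by positivity)).ne'
    (hVD.measure_ball_lt_top x _).ne
  have hlarge : ∀ t ∈ T, A ≤ CVD ^ n * (m (ball t (δ / 2))).toReal := fun t ht =>
    hVD.toReal_measure_ball_le hCVD (by positivity)
      (by linarith [mem_ball.mp (hT ht), dist_comm x t])
  have hdisj : (T : Set X).PairwiseDisjoint fun t => ball t (δ / 2) := fun a ha b hb hab =>
    Set.disjoint_left.mpr fun y hya hyb => by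
      rw [mem_ball] at hya hyb
      linarith [hsep ha hb hab, dist_triangle_left a b y]
  have hunion : ⋃ t ∈ T, ball t (δ / 2) ⊆ ball x (R + δ / 2) := by
    refine Set.iUnion₂_subset fun t ht y hy => ?_
    rw [mem_ball] at hy ⊢
    linarith [mem_ball.mp (hT ht), dist_triangle y t x]
  have hsmall : ∑ t ∈ T, (m (ball t (δ / 2))).toReal ≤ A := by
    rw [← ENNReal.toReal_sum fun t _ => (hVD.measure_ball_lt_top t _).ne,
      ← measure_biUnion_finset hdisj fun t _ => measurableSet_ball]
    exact ENNReal.toReal_mono (hVD.measure_ball_lt_top x _).ne (measure_mono hunion)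
  refine le_of_mul_le_mul_right ?_ hA
  calc (T.card : ℝ) * A = ∑ _t ∈ T, A := by rw [Finset.sum_const, nsmul_eq_mul]
    _ ≤ ∑ t ∈ T, CVD ^ n * (m (ball t (δ / 2))).toReal := Finset.sum_le_sum hlarge
    _ = CVD ^ n * ∑ t ∈ T, (m (ball t (δ / 2))).toReal := by rw [Finset.mul_sum]
    _ ≤ CVD ^ n * A := by gcongr

lemma exists_finset_separated_covering (hCVD : 0 ≤ CVD) (hVD : VolDoublingWith m CVD) (x : X)
    {R δ : ℝ} (hR : 0 < R) (hδ : 0 < δ) {n : ℕ} (hn : 2 * R + δ / 2 ≤ 2 ^ n * (δ / 2)) :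
    ∃ T : Finset X, ↑T ⊆ ball x R ∧ ((T : Set X).Pairwise fun a b => δ ≤ dist a b) ∧
      ∀ y ∈ ball x R, ∃ t ∈ T, dist y t < δ := by
  classical
  let P : ℕ → Prop := fun k => ∃ T : Finset X, ↑T ⊆ ball x R ∧
    ((T : Set X).Pairwise fun a b => δ ≤ dist a b) ∧ T.card = k
  have hbound : ∀ k, P k → k ≤ ⌊CVD ^ n⌋₊ := by
    rintro k ⟨T, hT, hsep, rfl⟩
    exact Nat.le_floor (hVD.card_le_of_separated hCVD hR hδ hn hT hsep)
  obtain ⟨T, hT, hsep, hcard⟩ : P (Nat.findGreatest P ⌊CVD ^ n⌋₊) :=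
    Nat.findGreatest_spec (Nat.zero_le _) ⟨∅, by simp, by simp, rfl⟩
  refine ⟨T, hT, hsep, fun y hy => ?_⟩
  by_contra! hfar
  have hyT : y ∉ T := fun hyT => (hfar y hyT).not_gt (by rwa [dist_self])
  have hins : P (T.card + 1) := by
    refine ⟨insert y T, ?_, ?_, Finset.card_insert_of_notMem hyT⟩
    · rw [Finset.coe_insert]; exact Set.insert_subset hy hT
    · rw [Finset.coe_insert, Set.pairwise_insert]
      exact ⟨hsep, fun b hb _ => ⟨hfar b hb, by rw [dist_comm]; exact hfar b hb⟩⟩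
  have := Nat.le_findGreatest (hbound _ hins) hins
  omega

end VolDoublingWith

end VolumeDoubling

section Cutoffs

variable {X : Type*} [MetricSpace X]

structure IsBallCutoff (x : X) (r R : ℝ) (f : X → ℝ) : Prop where
  nonneg : ∀ y, 0 ≤ f y
  le_one : ∀ y, f y ≤ 1
  eq_one : ∀ y ∈ ball x r, f y = 1
  eq_zero : ∀ y ∉ ball x R, f y = 0

namespace IsBallCutoff

variable {x y : X} {r R : ℝ} {f : X → ℝ}

lemma mono (h : IsBallCutoff x r R f) {R' : ℝ} (hR : R ≤ R') : IsBallCutoff x r R' f :=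
  ⟨h.nonneg, h.le_one, h.eq_one, fun y hy => h.eq_zero y fun hy' => hy (ball_subset_ball hR hy')⟩

lemma dist_lt_of_ne_zero (h : IsBallCutoff x r R f) (hy : f y ≠ 0) : dist y x < R :=
  mem_ball.mp (not_not.mp (mt (h.eq_zero y) hy))

lemma abs_le_one (h : IsBallCutoff x r R f) (y : X) : |f y| ≤ 1 :=
  abs_le.mpr ⟨by linarith [h.nonneg y], h.le_one y⟩

lemma unitClamp_sum {T : Finset X} {g : X → X → ℝ} {s : ℝ}
    (hg : ∀ t, IsBallCutoff t s R (g t)) (hTx : ↑T ⊆ ball x r)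
    (hcov : ∀ y ∈ ball x r, ∃ t ∈ T, dist y t < s) :
    IsBallCutoff x r (r + R) (unitClamp ∘ ∑ t ∈ T, g t) := by
  refine ⟨fun y => (unitClamp_mem_Icc _).1, fun y => (unitClamp_mem_Icc _).2, fun y hy => ?_,
    fun y hy => ?_⟩
  · obtain ⟨t, ht, hyt⟩ := hcov y hy
    refine unitClamp_of_one_le ?_
    rw [Finset.sum_apply, ← (hg t).eq_one y (mem_ball.mpr hyt)]
    exact Finset.single_le_sum (fun t _ => (hg t).nonneg y) ht
  · refine unitClamp_of_nonpos (Finset.sum_apply y T g ▸ (Finset.sum_eq_zero fun t ht => ?_).le)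
    refine (hg t).eq_zero y fun hyt => hy ?_
    rw [mem_ball] at hyt ⊢
    linarith [mem_ball.mp (hTx ht), dist_triangle y t x]

end IsBallCutoff

variable [MeasurableSpace X] {m : Measure X} {p : ℝ} {PE : PEnergy p m}

def CapUpperWith (PE : PEnergy p m) (Ψ : ℝ → ℝ) (C A : ℝ) : Prop :=
  ∀ (x : X) (r : ℝ), 0 < r → capBetween p m PE (ball x r) (ball x (A * r))ᶜ
    ≤ ENNReal.ofReal C * m (ball x r) / ENNReal.ofReal (Ψ r)

lemma exists_cutoff_of_capBetween_lt {A₁ A₂ : Set X} {c : ℝ}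
    (h : capBetween p m PE A₁ A₂ < ENNReal.ofReal c) :
    ∃ φ ∈ PE.F, (∀ y, φ y ∈ Icc 0 1) ∧ (∀ y ∈ A₁, φ y = 1) ∧ (∀ y ∈ A₂, φ y = 0) ∧
      PE.E φ < c := by
  obtain ⟨_, ⟨φ, ⟨hφF, ⟨U, -, hAU, hU⟩, ⟨W, -, hAW, hW⟩⟩, rfl⟩, hlt⟩ := sInf_lt_iff.mp h
  refine ⟨unitClamp ∘ φ, PE.comp_mem lipschitzWith_unitClamp (unitClamp_of_nonpos le_rfl) hφF,
    fun y => unitClamp_mem_Icc _, fun y hy => ?_, fun y hy => ?_, ?_⟩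
  · simp [hU y (hAU hy), unitClamp_of_one_le le_rfl]
  · simp [hW y (hAW hy), unitClamp_of_nonpos le_rfl]
  · exact (PE.E_comp_le lipschitzWith_unitClamp (unitClamp_of_nonpos le_rfl) hφF).trans_lt
      (ENNReal.ofReal_lt_ofReal_iff'.mp hlt).1

variable [LocallyCompactSpace X] [IsFiniteMeasureOnCompacts m]
  [m.IsOpenPosMeasure] {Ψ : ℝ → ℝ} {CVD Ccap Acap : ℝ}

lemma exists_isBallCutoff_of_capUpperWith (hVD : VolDoublingWith m CVD) (hCcap : 0 < Ccap)
    (hcap : CapUpperWith PE Ψ Ccap Acap) (x : X) {r : ℝ} (hr : 0 < r) (hΨr : 0 < Ψ r) :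
    ∃ φ ∈ PE.F, IsBallCutoff x r (Acap * r) φ ∧
      PE.E φ ≤ 2 * Ccap * (m (ball x r)).toReal / Ψ r := by
  set b := Ccap * (m (ball x r)).toReal / Ψ r
  have hb : 0 < b := by
    have := ENNReal.toReal_pos (measure_ball_pos m x hr).ne' (hVD.measure_ball_lt_top x r).ne
    positivity
  have hcap_lt : capBetween p m PE (ball x r) (ball x (Acap * r))ᶜ < ENNReal.ofReal (2 * b) := by
    refine (hcap x r hr).trans_lt ?_
    rw [ofReal_mul_div_ofReal (hVD.measure_ball_lt_top x r).ne hCcap.le hΨr,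
      ENNReal.ofReal_lt_ofReal_iff (by positivity)]
    linarith
  obtain ⟨φ, hφF, hφ01, hφ1, hφ0, hφE⟩ := exists_cutoff_of_capBetween_lt hcap_lt
  exact ⟨φ, hφF, ⟨fun y => (hφ01 y).1, fun y => (hφ01 y).2, hφ1, hφ0⟩,
    hφE.le.trans_eq (by ring)⟩

end Cutoffs

section ThinCutoff

variable {X : Type*} [MetricSpace X] [MeasurableSpace X] [OpensMeasurableSpace X]
  [LocallyCompactSpace X] {m : Measure X} [IsFiniteMeasureOnCompacts m] [m.IsOpenPosMeasure]
  {p : ℝ} {PE : PEnergy p m} {Ψ : ℝ → ℝ} {CΨ CVD Ccap Acap : ℝ}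

/-- Cover `B(x, r)` by the balls `B(t, s)` around a maximal `s`-separated set `T`, with
`s = η r / A_cap`; summing the capacity cutoffs of the pairs `B(t, s) ⊆ B(t, η r)` and
clamping gives the cutoff, and (VD) bounds `#T`. -/
theorem exists_thin_isBallCutoff (hp : 0 < p) (hΨ : DoublingFn Ψ CΨ) (hCVD : 0 < CVD)
    (hVD : VolDoublingWith m CVD) (hCcap : 0 < Ccap) (hAcap : 1 < Acap)
    (hcap : CapUpperWith PE Ψ Ccap Acap) {η : ℝ} (hη : 0 < η) (hη₁ : η ≤ 1) :
    ∃ C > 0, ∀ (x : X) (r : ℝ), 0 < r → ∃ φ ∈ PE.F, IsBallCutoff x r ((1 + η) * r) φ ∧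
      PE.E φ ≤ C * (m (ball x r)).toReal / Ψ r := by
  obtain ⟨k, hk⟩ := pow_unbounded_of_one_lt (Acap / η) (one_lt_two (α := ℝ))
  obtain ⟨n, hn⟩ := pow_unbounded_of_one_lt (4 * Acap / η + 1) (one_lt_two (α := ℝ))
  have hCΨ : 0 < CΨ := zero_lt_one.trans hΨ.one_lt
  refine ⟨(CVD ^ n) ^ p * (2 * Ccap * (CVD ^ 1 * CΨ ^ k)), by positivity, fun x r hr => ?_⟩
  have hA : 0 < Acap := zero_lt_one.trans hAcap
  set s := η * r / Acap with hs_def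
  have hs : 0 < s := by positivity
  have hAs : Acap * s = η * r := by rw [hs_def]; field_simp
  have hsr : s ≤ r := by
    rw [hs_def, div_le_iff₀ hA]; nlinarith
  have hrs : r ≤ 2 ^ k * s := by
    rw [div_lt_iff₀ hη] at hk
    rw [hs_def, mul_div_assoc', le_div_iff₀ hA]; nlinarith
  have hcount : 2 * r + s / 2 ≤ 2 ^ n * (s / 2) := by
    have : 4 * Acap / η * (s / 2) = 2 * r := by rw [hs_def]; field_simp; ring
    nlinarith
  obtain ⟨T, hTx, hTsep, hTcov⟩ :=
    hVD.exists_finset_separated_covering hCVD.le x hr hs hcount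
  choose φ hφF hφ hφE using fun t : X =>
    exists_isBallCutoff_of_capUpperWith hVD hCcap hcap t hs (hΨ.pos s hs)
  have hsumF : ∑ t ∈ T, φ t ∈ PE.F := PE.sum_mem T fun t _ => hφF t
  set D := 2 * Ccap * (CVD ^ 1 * CΨ ^ k * (m (ball x r)).toReal / Ψ r)
  have hD : 0 ≤ D := by have := hΨ.pos r hr; positivity
  have hφD : ∀ t ∈ T, PE.E (φ t) ≤ D := fun t ht => by
    refine (hφE t).trans ?_
    rw [mul_div_assoc]
    exact mul_le_mul_of_nonneg_left (hVD.toReal_measure_ball_div_le hΨ hCVD.le hs hr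
      (by linarith [mem_ball.mp (hTx ht)]) hrs) (by positivity)
  refine ⟨unitClamp ∘ ∑ t ∈ T, φ t,
    PE.comp_mem lipschitzWith_unitClamp (unitClamp_of_nonpos le_rfl) hsumF,
    (IsBallCutoff.unitClamp_sum hφ hTx hTcov).mono (by rw [hAs]; linarith), ?_⟩
  have hN := PE.rpow_E_sum_le_card_mul hp T (fun t _ => hφF t) hφD
  have hcard := hVD.card_le_of_separated hCVD.le hr hs hcount hTx hTsep
  refine (PE.E_comp_le lipschitzWith_unitClamp (unitClamp_of_nonpos le_rfl) hsumF).trans ?_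
  calc PE.E (∑ t ∈ T, φ t) ≤ (CVD ^ n) ^ p * D :=
        le_rpow_mul_of_rpow_one_div_le hp (PE.nonneg _ hsumF) (by positivity) hD
          (hN.trans (by gcongr))
    _ = _ := by ring

end ThinCutoff

section NetPartition

variable {X : Type*} [MetricSpace X] {ε : ℝ} {V : Set X} {θ φ : X → X → ℝ}

lemma IsNet.pairwise (hV : IsNet ε V) : V.Pairwise fun a b => ε ≤ dist a b := hV.1

lemma tsum_subtype_eq_sum_of_isBallCutoff {f : X → X → ℝ} {r R : ℝ}
    (hf : ∀ w, IsBallCutoff w r R (f w)) {y : X} {s : Finset X} (hsV : ↑s ⊆ V)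
    (hs : ∀ w ∈ V, dist y w < R → w ∈ s) : ∑' w : V, f w y = ∑ w ∈ s, f w y :=
  tsum_subtype_eq_sum hsV fun w hwV hws => by
    by_contra h
    exact hws (hs w hwV ((hf w).dist_lt_of_ne_zero h))

lemma le_tsum_of_isBallCutoff {f : X → X → ℝ} {r R ρ : ℝ} (hf : ∀ w, IsBallCutoff w r R (f w))
    {y : X} (hfin : (V ∩ ball y ρ).Finite) (hRρ : R ≤ ρ) {z : X} (hz : z ∈ V) :
    f z y ≤ ∑' w : V, f w y := by
  classical
  have hsV : ↑(insert z hfin.toFinset) ⊆ V := by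
    rw [Finset.coe_insert, Set.Finite.coe_toFinset]
    exact Set.insert_subset hz inter_subset_left
  rw [tsum_subtype_eq_sum_of_isBallCutoff hf hsV fun w hw hyw => Finset.mem_insert_of_mem
    (hfin.mem_toFinset.mpr ⟨hw, mem_ball.mpr (by rw [dist_comm]; linarith)⟩)]
  exact Finset.single_le_sum (fun w _ => (hf w).nonneg y) (Finset.mem_insert_self z _)

lemma IsNet.sum_le_one (hV : IsNet ε V) {r : ℝ} (hθ : ∀ w, IsBallCutoff w r (ε / 2) (θ w))
    {s : Finset X} (hsV : ↑s ⊆ V) (y : X) : ∑ w ∈ s, θ w y ≤ 1 := by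
  by_cases h : ∃ w ∈ s, θ w y ≠ 0
  · obtain ⟨w, hws, hw⟩ := h
    rw [Finset.sum_eq_single_of_mem w hws fun v hvs hvw => ?_]
    · exact (hθ w).le_one y
    by_contra hv
    linarith [hV.pairwise (hsV hvs) (hsV hws) hvw, (hθ v).dist_lt_of_ne_zero hv,
      (hθ w).dist_lt_of_ne_zero hw, dist_triangle_left v w y]
  · push Not at h
    rw [Finset.sum_eq_zero h]
    exact zero_le_one

lemma IsNet.tsum_le_one (hV : IsNet ε V) {r ρ : ℝ} (hθ : ∀ w, IsBallCutoff w r (ε / 2) (θ w))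
    {y : X} (hfin : (V ∩ ball y ρ).Finite) (hρ : ε / 2 ≤ ρ) : ∑' w : V, θ w y ≤ 1 := by
  have hsV : ↑hfin.toFinset ⊆ V := by rw [Set.Finite.coe_toFinset]; exact inter_subset_left
  rw [tsum_subtype_eq_sum_of_isBallCutoff hθ hsV fun w hw hyw =>
    hfin.mem_toFinset.mpr ⟨hw, mem_ball.mpr (by rw [dist_comm]; linarith)⟩]
  exact hV.sum_le_one hθ hsV y

lemma IsNet.one_le_tsum (hV : IsNet ε V) {R ρ : ℝ} (hφ : ∀ w, IsBallCutoff w ε R (φ w)) {y : X}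
    (hfin : (V ∩ ball y ρ).Finite) (hRρ : R ≤ ρ) : 1 ≤ ∑' w : V, φ w y := by
  obtain ⟨w, hw, hwy⟩ := hV.2 y
  rw [← (hφ w).eq_one y (mem_ball.mpr (by rwa [dist_comm]))]
  exact le_tsum_of_isBallCutoff hφ hfin hRρ hw

/-- For the cutoffs used below only finitely many terms of the sums are nonzero near any point,
and `∑ φ_w ≥ 1`, so neither the `tsum`s nor the division take junk values. -/
noncomputable def netPartition (V : Set X) (θ φ : X → X → ℝ) (z y : X) : ℝ :=
  θ z y + φ z y * (1 - ∑' w : V, θ w y) / ∑' w : V, φ w y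

lemma netPartition_eq_zero (hε : 0 < ε) (hθ : ∀ w, IsBallCutoff w (ε / 4) (ε / 2) (θ w))
    (hφ : ∀ w, IsBallCutoff w ε (5 * ε / 4) (φ w)) {z y : X} (hy : y ∉ ball z (5 * ε / 4)) :
    netPartition V θ φ z y = 0 := by
  rw [netPartition, (hφ z).eq_zero y hy,
    (hθ z).eq_zero y fun hy' => hy (ball_subset_ball (by linarith) hy')]
  simp

lemma netPartition_eq_one (hε : 0 < ε) (hV : IsNet ε V)
    (hθ : ∀ w, IsBallCutoff w (ε / 4) (ε / 2) (θ w)) {z y : X} (hz : z ∈ V)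
    (hfin : (V ∩ ball y (3 * ε)).Finite) (hy : y ∈ ball z (ε / 4)) :
    netPartition V θ φ z y = 1 := by
  have hθz : θ z y = 1 := (hθ z).eq_one y hy
  have hΘ : ∑' w : V, θ w y = 1 := le_antisymm (hV.tsum_le_one hθ hfin (by linarith))
    (hθz ▸ le_tsum_of_isBallCutoff hθ hfin (by linarith) hz)
  simp [netPartition, hθz, hΘ]

lemma netPartition_mem_Icc (hε : 0 < ε) (hV : IsNet ε V)
    (hθ : ∀ w, IsBallCutoff w (ε / 4) (ε / 2) (θ w))
    (hφ : ∀ w, IsBallCutoff w ε (5 * ε / 4) (φ w)) {z y : X} (hz : z ∈ V)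
    (hfin : (V ∩ ball y (3 * ε)).Finite) : netPartition V θ φ z y ∈ Icc 0 1 := by
  set Θ := ∑' w : V, θ w y
  set H := ∑' w : V, φ w y
  have hΘ : Θ ≤ 1 := hV.tsum_le_one hθ hfin (by linarith)
  have hθΘ : θ z y ≤ Θ := le_tsum_of_isBallCutoff hθ hfin (by linarith) hz
  have hH : 1 ≤ H := hV.one_le_tsum hφ hfin (by linarith)
  have hratio : φ z y / H ≤ 1 :=
    div_le_one_of_le₀ (le_tsum_of_isBallCutoff hφ hfin (by linarith) hz) (by linarith)
  have hθ0 := (hθ z).nonneg y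
  have hratio0 : 0 ≤ φ z y / H := div_nonneg ((hφ z).nonneg y) (by linarith)
  have hψ : netPartition V θ φ z y = θ z y + (1 - Θ) * (φ z y / H) := by
    rw [netPartition]; ring
  rw [hψ]
  constructor <;> nlinarith

lemma tsum_netPartition (hε : 0 < ε) (hV : IsNet ε V)
    (hθ : ∀ w, IsBallCutoff w (ε / 4) (ε / 2) (θ w))
    (hφ : ∀ w, IsBallCutoff w ε (5 * ε / 4) (φ w)) {y : X}
    (hfin : (V ∩ ball y (3 * ε)).Finite) : ∑' z : V, netPartition V θ φ z y = 1 := by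
  set t := hfin.toFinset
  have htV : ↑t ⊆ V := by rw [Set.Finite.coe_toFinset]; exact inter_subset_left
  have hmem : ∀ w ∈ V, dist y w < 3 * ε → w ∈ t := fun w hw hyw =>
    hfin.mem_toFinset.mpr ⟨hw, mem_ball.mpr (by rwa [dist_comm])⟩
  have hΘ : ∑' w : V, θ w y = ∑ w ∈ t, θ w y :=
    tsum_subtype_eq_sum_of_isBallCutoff hθ htV fun w hw hyw => hmem w hw (by linarith)
  have hH : ∑' w : V, φ w y = ∑ w ∈ t, φ w y :=
    tsum_subtype_eq_sum_of_isBallCutoff hφ htV fun w hw hyw => hmem w hw (by linarith)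
  have hH1 : 1 ≤ ∑' w : V, φ w y := hV.one_le_tsum hφ hfin (by linarith)
  have hψ : ∀ w ∈ V, w ∉ t → netPartition V θ φ w y = 0 := fun w hw hwt =>
    netPartition_eq_zero hε hθ hφ fun hyw => hwt (hmem w hw (by linarith [mem_ball.mp hyw]))
  rw [tsum_subtype_eq_sum (f := fun z => netPartition V θ φ z y) htV hψ]
  simp only [netPartition, Finset.sum_add_distrib, ← Finset.sum_div, ← Finset.sum_mul, ← hΘ, ← hH]
  field_simp
  ring

/-- Near `z` the sums over the net are finite sums over `s`, and `1 / H = 1 + (1 / max H 1 - 1)`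
exhibits `ψ_z` as built from elements of `F` by sums, products and normal contractions. -/
lemma netPartition_eq_add (hε : 0 < ε) (hV : IsNet ε V)
    (hθ : ∀ w, IsBallCutoff w (ε / 4) (ε / 2) (θ w))
    (hφ : ∀ w, IsBallCutoff w ε (5 * ε / 4) (φ w)) {z : X} {s : Finset X} (hsV : ↑s ⊆ V)
    (hs : ∀ w ∈ V, dist w z < 5 * ε / 2 → w ∈ s) :
    netPartition V θ φ z = θ z + ((φ z - φ z * ∑ w ∈ s, θ w) +
      (φ z - φ z * ∑ w ∈ s, θ w) * (invMaxOneSubOne ∘ ∑ w ∈ s, φ w)) := by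
  ext y
  by_cases hy : y ∈ ball z (5 * ε / 4)
  · have hsy : ∀ w ∈ V, dist y w < 5 * ε / 4 → w ∈ s := fun w hw hyw =>
      hs w hw (by linarith [mem_ball.mp hy, dist_triangle_left w z y])
    have hΘ := tsum_subtype_eq_sum_of_isBallCutoff (y := y) hθ hsV fun w hw hyw =>
      hsy w hw (by linarith)
    have hH := tsum_subtype_eq_sum_of_isBallCutoff hφ hsV hsy
    have hH1 : 1 ≤ ∑ w ∈ s, φ w y := by
      obtain ⟨w, hw, hwy⟩ := hV.2 y
      rw [← (hφ w).eq_one y (mem_ball.mpr (by rwa [dist_comm]))]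
      exact Finset.single_le_sum (fun w _ => (hφ w).nonneg y)
        (hsy w hw (by linarith [dist_comm w y]))
    simp only [netPartition, hΘ, hH, Pi.add_apply, Pi.sub_apply, Pi.mul_apply,
      Function.comp_apply, Finset.sum_apply, invMaxOneSubOne_of_one_le hH1]
    field_simp
    ring
  · simp [netPartition, (hφ z).eq_zero y hy]

lemma netPartition_mem_and_rpow_E_le [MeasurableSpace X] {m : Measure X} {p : ℝ}
    {PE : PEnergy p m} (hp : 0 < p)
    (hε : 0 < ε) (hV : IsNet ε V) (hθF : ∀ w, θ w ∈ PE.F)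
    (hθ : ∀ w, IsBallCutoff w (ε / 4) (ε / 2) (θ w)) (hφF : ∀ w, φ w ∈ PE.F)
    (hφ : ∀ w, IsBallCutoff w ε (5 * ε / 4) (φ w)) {z : X} (hz : z ∈ V) {s : Finset X}
    (hsV : ↑s ⊆ V) (hs : ∀ w ∈ V, dist w z < 5 * ε / 2 → w ∈ s) {b : ℝ}
    (hb : ∀ w ∈ s, PE.E (θ w) ≤ b ∧ PE.E (φ w) ≤ b) :
    netPartition V θ φ z ∈ PE.F ∧
      PE.E (netPartition V θ φ z) ^ (1 / p) ≤ (17 + 15 * s.card) * b ^ (1 / p) := by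
  have hzs : z ∈ s := hs z hz (by rw [dist_self]; positivity)
  set Θ := ∑ w ∈ s, θ w
  set H := ∑ w ∈ s, φ w
  set u := φ z - φ z * Θ
  set κ := invMaxOneSubOne ∘ H
  have hΘF : Θ ∈ PE.F := PE.sum_mem s fun w _ => hθF w
  have hHF : H ∈ PE.F := PE.sum_mem s fun w _ => hφF w
  have hΘ01 : ∀ y, 0 ≤ Θ y ∧ Θ y ≤ 1 := fun y => by
    rw [show Θ y = ∑ w ∈ s, θ w y from Finset.sum_apply y s θ]
    exact ⟨Finset.sum_nonneg fun w _ => (hθ w).nonneg y, hV.sum_le_one hθ hsV y⟩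
  have hbΘ : ∀ y, |Θ y| ≤ 1 := fun y => abs_le.mpr ⟨by linarith [hΘ01 y], (hΘ01 y).2⟩
  have hbu : ∀ y, |u y| ≤ 1 := fun y => by
    have h₀ := (hφ z).nonneg y
    have h₁ := (hφ z).le_one y
    have hΘy := hΘ01 y
    simp only [u, Pi.sub_apply, Pi.mul_apply]
    exact abs_le.mpr ⟨by nlinarith, by nlinarith⟩
  have hbκ : ∀ y, |κ y| ≤ 1 := fun y => abs_invMaxOneSubOne_le_one _
  have hφΘF : φ z * Θ ∈ PE.F := PE.mul_mem (hφF z) hΘF (hφ z).abs_le_one hbΘ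
  have huF : u ∈ PE.F := PE.sub_mem (hφF z) hφΘF
  have hκF : κ ∈ PE.F := PE.comp_mem lipschitzWith_invMaxOneSubOne invMaxOneSubOne_zero hHF
  have huκF : u * κ ∈ PE.F := PE.mul_mem huF hκF hbu hbκ
  rw [netPartition_eq_add hε hV hθ hφ hsV hs]
  refine ⟨PE.add_mem _ (hθF z) _ (PE.add_mem _ huF _ huκF), ?_⟩
  set β := b ^ (1 / p)
  have hθz : PE.E (θ z) ^ (1 / p) ≤ β :=
    Real.rpow_le_rpow (PE.nonneg _ (hθF z)) (hb z hzs).1 (by positivity)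
  have hφz : PE.E (φ z) ^ (1 / p) ≤ β :=
    Real.rpow_le_rpow (PE.nonneg _ (hφF z)) (hb z hzs).2 (by positivity)
  have hΘ := PE.rpow_E_sum_le_card_mul hp s (fun w _ => hθF w) fun w hw => (hb w hw).1
  have hH := PE.rpow_E_sum_le_card_mul hp s (fun w _ => hφF w) fun w hw => (hb w hw).2
  have hκ : PE.E κ ^ (1 / p) ≤ PE.E H ^ (1 / p) := Real.rpow_le_rpow (PE.nonneg _ hκF)
    (PE.E_comp_le lipschitzWith_invMaxOneSubOne invMaxOneSubOne_zero hHF) (by positivity)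
  have hφΘ := PE.rpow_E_mul_le hp (hφF z) hΘF (hφ z).abs_le_one hbΘ
  have hu := PE.rpow_E_sub_le (hφF z) hφΘF
  have huκ := PE.rpow_E_mul_le hp huF hκF hbu hbκ
  have h₁ := PE.norm_triangle _ (hθF z) _ (PE.add_mem _ huF _ huκF)
  have h₂ := PE.norm_triangle _ huF _ huκF
  have hexpand : (17 + 15 * (s.card : ℝ)) * β = 17 * β + 15 * (s.card * β) := by ring
  linarith

end NetPartition

section NetPartitionEnergy

variable {X : Type*} [MetricSpace X] [MeasurableSpace X] [OpensMeasurableSpace X]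
  [LocallyCompactSpace X] {m : Measure X} [IsFiniteMeasureOnCompacts m] [m.IsOpenPosMeasure]
  {p : ℝ} {PE : PEnergy p m} {Ψ : ℝ → ℝ} {CΨ CVD ε : ℝ} {V : Set X}

lemma IsNet.card_le (hCVD : 0 ≤ CVD) (hVD : VolDoublingWith m CVD) (hε : 0 < ε)
    (hV : IsNet ε V) {y : X} {s : Finset X} (hs : ↑s ⊆ V ∩ ball y (3 * ε)) :
    (s.card : ℝ) ≤ CVD ^ 4 :=
  hVD.card_le_of_separated hCVD (by positivity) hε (by linarith) (hs.trans inter_subset_right)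
    (hV.pairwise.mono (hs.trans inter_subset_left))

lemma IsNet.finite_inter_ball (hCVD : 0 ≤ CVD) (hVD : VolDoublingWith m CVD) (hε : 0 < ε)
    (hV : IsNet ε V) (y : X) : (V ∩ ball y (3 * ε)).Finite :=
  finite_of_forall_finset_card_le fun _ hs => hV.card_le hCVD hVD hε hs

lemma netPartition_mem_and_E_le (hp : 0 < p) (hΨ : DoublingFn Ψ CΨ) (hCVD : 0 ≤ CVD)
    (hVD : VolDoublingWith m CVD) (hε : 0 < ε) (hV : IsNet ε V) {θ φ : X → X → ℝ} {C : ℝ}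
    (hC : 0 ≤ C) (hθF : ∀ w, θ w ∈ PE.F) (hθ : ∀ w, IsBallCutoff w (ε / 4) (ε / 2) (θ w))
    (hθE : ∀ w, PE.E (θ w) ≤ C * (m (ball w (ε / 4))).toReal / Ψ (ε / 4))
    (hφF : ∀ w, φ w ∈ PE.F) (hφ : ∀ w, IsBallCutoff w ε (5 * ε / 4) (φ w))
    (hφE : ∀ w, PE.E (φ w) ≤ C * (m (ball w ε)).toReal / Ψ ε) {z : X} (hz : z ∈ V) :
    netPartition V θ φ z ∈ PE.F ∧ ENNReal.ofReal (PE.E (netPartition V θ φ z)) ≤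
      ENNReal.ofReal ((17 + 15 * CVD ^ 4) ^ p * (C * CVD ^ 2 * CΨ ^ 2)) * m (ball z ε) /
        ENNReal.ofReal (Ψ ε) := by
  have hfin := hV.finite_inter_ball hCVD hVD hε z
  set s := hfin.toFinset
  have hsV : ↑s ⊆ V := by rw [Set.Finite.coe_toFinset]; exact inter_subset_left
  have hsz : ∀ w ∈ s, dist w z < 3 * ε := fun w hw => mem_ball.mp (hfin.mem_toFinset.mp hw).2
  set b := C * (CVD ^ 2 * CΨ ^ 2 * (m (ball z ε)).toReal / Ψ ε)
  have hratio : ∀ w ∈ s, ∀ ρ, 0 < ρ → ρ ≤ ε → ε ≤ 4 * ρ →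
      C * (m (ball w ρ)).toReal / Ψ ρ ≤ b := fun w hw ρ hρ hρε hερ => by
    rw [mul_div_assoc]
    exact mul_le_mul_of_nonneg_left (hVD.toReal_measure_ball_div_le hΨ hCVD hρ hε
      (by norm_num; linarith [hsz w hw]) (by norm_num; linarith)) hC
  have hb : ∀ w ∈ s, PE.E (θ w) ≤ b ∧ PE.E (φ w) ≤ b := fun w hw =>
    ⟨(hθE w).trans (hratio w hw _ (by positivity) (by linarith) (by linarith)),
      (hφE w).trans (hratio w hw ε hε le_rfl (by linarith))⟩
  obtain ⟨hmem, hN⟩ := netPartition_mem_and_rpow_E_le hp hε hV hθF hθ hφF hφ hz hsV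
    (fun w hw hwz => hfin.mem_toFinset.mpr ⟨hw, mem_ball.mpr (by linarith)⟩) hb
  have hK : 17 + 15 * (s.card : ℝ) ≤ 17 + 15 * CVD ^ 4 := by
    linarith [hV.card_le hCVD hVD hε (y := z) (s := s) (by rw [Set.Finite.coe_toFinset])]
  have hb₀ : 0 ≤ b := by have := hΨ.pos ε hε; positivity
  have hE : PE.E (netPartition V θ φ z) ≤ (17 + 15 * CVD ^ 4) ^ p * b :=
    le_rpow_mul_of_rpow_one_div_le hp (PE.nonneg _ hmem) (by positivity) hb₀
      (hN.trans (mul_le_mul_of_nonneg_right hK (Real.rpow_nonneg hb₀ _)))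
  refine ⟨hmem, ?_⟩
  rw [ofReal_mul_div_ofReal (hVD.measure_ball_lt_top z ε).ne
    (mul_nonneg (Real.rpow_nonneg (by positivity) _) (by positivity)) (hΨ.pos ε hε)]
  exact ENNReal.ofReal_le_ofReal (hE.trans_eq (by ring))

end NetPartitionEnergy

theorem statement_6_general {X : Type*} [MetricSpace X] [LocallyCompactSpace X]
    [MeasurableSpace X] [BorelSpace X]
    (m : Measure X) [m.Regular] [m.IsOpenPosMeasure]
    (p : ℝ) (hp : 1 < p) (PE : PEnergy p m)
    (Ψ : ℝ → ℝ) (CΨ : ℝ) (hΨ : DoublingFn Ψ CΨ)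
    (CVD : ℝ) (hCVD : 0 < CVD)
    (hVD : ∀ (x : X) (r : ℝ), 0 < r →
      m (ball x (2 * r)) ≤ ENNReal.ofReal CVD * m (ball x r))
    (Ccap Acap : ℝ) (hCcap : 0 < Ccap) (hAcap : 1 < Acap)
    (hcap : ∀ (x : X) (r : ℝ), 0 < r →
      capBetween p m PE (ball x r) (ball x (Acap * r))ᶜ
        ≤ ENNReal.ofReal Ccap * m (ball x r) / ENNReal.ofReal (Ψ r)) :
    ∃ Ccut : ℝ, 0 < Ccut ∧ ∀ ε : ℝ, 0 < ε →
      ENNReal.ofReal ε < EMetric.diam (Set.univ : Set X) →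
      ∀ V : Set X, IsNet ε V → ∃ ψ : X → X → ℝ,
        (∀ z ∈ V, ψ z ∈ PE.F ∧
          (∀ y, 0 ≤ ψ z y ∧ ψ z y ≤ 1) ∧
          (∀ y ∈ ball z (ε / 4), ψ z y = 1) ∧
          (∀ y ∉ ball z (5 * ε / 4), ψ z y = 0) ∧
          ENNReal.ofReal (PE.E (ψ z)) ≤
            ENNReal.ofReal Ccut * m (ball z ε) / ENNReal.ofReal (Ψ ε)) ∧
        ∀ y : X, ∑' z : V, ψ (z : X) y = 1 := by
  have hp₀ : 0 < p := zero_lt_one.trans hp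
  obtain ⟨C, hC, hcut⟩ := exists_thin_isBallCutoff hp₀ hΨ hCVD hVD hCcap hAcap hcap
    (η := 1 / 4) (by norm_num) (by norm_num)
  have hCΨ : 1 ≤ CΨ := hΨ.one_lt.le
  refine ⟨(17 + 15 * CVD ^ 4) ^ p * (C * CVD ^ 2 * CΨ ^ 2), by positivity,
    fun ε hε _ V hV => ?_⟩
  choose θ hθF hθ hθE using fun w : X => hcut w (ε / 4) (by positivity)
  choose φ hφF hφ hφE using fun w : X => hcut w ε hε
  have hθ' : ∀ w, IsBallCutoff w (ε / 4) (ε / 2) (θ w) := fun w => (hθ w).mono (by linarith)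
  have hφ' : ∀ w, IsBallCutoff w ε (5 * ε / 4) (φ w) := fun w => (hφ w).mono (by linarith)
  have hfin := hV.finite_inter_ball hCVD.le hVD hε
  refine ⟨netPartition V θ φ, fun z hz => ?_, fun y => tsum_netPartition hε hV hθ' hφ' (hfin y)⟩
  obtain ⟨hmem, hE⟩ := netPartition_mem_and_E_le hp₀ hΨ hCVD.le hVD hε hV hC.le hθF hθ' hθE
    hφF hφ' hφE hz
  exact ⟨hmem, fun y => netPartition_mem_Icc hε hV hθ' hφ' hz (hfin y),
    fun y hy => netPartition_eq_one hε hV hθ' hz (hfin y) hy,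
    fun y hy => netPartition_eq_zero hε hθ' hφ' hy, hE⟩

theorem statement_6 {X : Type*} [MetricSpace X] [LocallyCompactSpace X]
    [TopologicalSpace.SeparableSpace X] [MeasurableSpace X] [BorelSpace X]
    (m : Measure X) [m.Regular] [m.IsOpenPosMeasure]
    (p : ℝ) (hp : 1 < p) (PE : PEnergy p m) (GM : PEnergyMeasure p m PE)
    (Ψ : ℝ → ℝ) (CΨ : ℝ) (hΨ : DoublingFn Ψ CΨ)
    (CVD : ℝ) (hCVD : 0 < CVD)
    (hVD : ∀ (x : X) (r : ℝ), 0 < r →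
      m (ball x (2 * r)) ≤ ENNReal.ofReal CVD * m (ball x r))
    (Ccap Acap : ℝ) (hCcap : 0 < Ccap) (hAcap : 1 < Acap)
    (hcap : ∀ (x : X) (r : ℝ), 0 < r →
      capBetween p m PE (ball x r) (ball x (Acap * r))ᶜ
        ≤ ENNReal.ofReal Ccap * m (ball x r) / ENNReal.ofReal (Ψ r)) :
    ∃ Ccut : ℝ, 0 < Ccut ∧ ∀ ε : ℝ, 0 < ε →
      ENNReal.ofReal ε < EMetric.diam (Set.univ : Set X) →
      ∀ V : Set X, IsNet ε V → ∃ ψ : X → X → ℝ,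
        (∀ z ∈ V, ψ z ∈ PE.F ∧
          (∀ y, 0 ≤ ψ z y ∧ ψ z y ≤ 1) ∧
          (∀ y ∈ ball z (ε / 4), ψ z y = 1) ∧
          (∀ y ∉ ball z (5 * ε / 4), ψ z y = 0) ∧
          ENNReal.ofReal (PE.E (ψ z)) ≤
            ENNReal.ofReal Ccut * m (ball z ε) / ENNReal.ofReal (Ψ ε)) ∧
        ∀ y : X, ∑' z : V, ψ (z : X) y = 1 :=
  statement_6_general m p hp PE Ψ CΨ hΨ CVD hCVD hVD Ccap Acap hCcap hAcap hcap
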